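/- Let Δ > 0, q ∈ ℝ, and ε > 0, and let p*(ε) = e^ε/(e^ε+1). For any two inputs a, a′ ∈ [q, q+Δ] and any output value x ∈ {q, q+Δ}, the DP stochastic quantizer M (which outputs the nearer endpoint with probability p*(ε) and the farther endpoint with probability 1−p*(ε)) satisfies Pr[M(a) = x] ≤ e^ε · Pr[M(a′) = x]. In particular the mechanism satisfies ε-differential privacy over inputs lying in a common quantization cell. -/

import Mathlib

open Real

/-- So the two output probabilities of the quantizer are `e^ε r` and `r`, with ratio exactly `e^ε`. -/
lemma one_sub_exp_div_exp_add_one (ε : ℝ) : 1 - exp ε / (exp ε + 1) = (exp ε + 1)⁻¹ := by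
  field_simp
  ring

lemma le_mul_of_mem_pair {c r y z : ℝ} (hc : 1 ≤ c) (hr : 0 ≤ r)
    (hy : y ∈ ({c * r, r} : Set ℝ)) (hz : z ∈ ({c * r, r} : Set ℝ)) : y ≤ c * z := by
  have hcr : r ≤ c * r := le_mul_of_one_le_left hr hc
  have hccr : c * r ≤ c * (c * r) := mul_le_mul_of_nonneg_left hcr (by linarith)
  rcases hy with rfl | rfl <;> rcases hz with rfl | rfl <;> linarith

theorem dp_sq_eps_dp (Δ q ε : ℝ) (hε : 0 < ε)
    (M : ℝ → ℝ → ℝ)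
    (hM : ∀ a x : ℝ,
      M a x =
        if (if a - q ≤ (q + Δ) - a then q else q + Δ) = x
        then Real.exp ε / (Real.exp ε + 1)
        else 1 - Real.exp ε / (Real.exp ε + 1)) :
    ∀ a ∈ Set.Icc q (q + Δ), ∀ a' ∈ Set.Icc q (q + Δ),
      ∀ x ∈ ({q, q + Δ} : Set ℝ), M a x ≤ Real.exp ε * M a' x := by
  intro a _ a' _ x _
  have hM_mem : ∀ b, M b x ∈ ({exp ε * (exp ε + 1)⁻¹, (exp ε + 1)⁻¹} : Set ℝ) := by
    intro b
    rw [hM, one_sub_exp_div_exp_add_one, div_eq_mul_inv]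
    split_ifs <;> simp
  exact le_mul_of_mem_pair (one_le_exp hε.le) (by positivity) (hM_mem a) (hM_mem a')
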